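/- arXiv:2407.12191 — 2 statements merged into one kernel-verified Lean document; each statement's English description precedes it below -/
import Mathlib

section
/- Let Ω ⊆ ℝ^N be open and let u ∈ C₀^∞(Ω) (u is C^∞ on ℝ^N with compact support contained in Ω). Assume (g1)–(g4) hold and G ∈ B_f. Then ∫_Ω∫_Ω G(x, y, |u(x)−u(y)|/|x−y|^s) dx dy / |x−y|^N < +∞. -/
open MeasureTheory Set Filter Topology
open scoped ENNReal Pointwise

noncomputable section

abbrev Euc (N : ℕ) : Type := EuclideanSpace ℝ (Fin N)

/-- `G(x,y,t) = ∫₀ᵗ a(x,y,τ) τ dτ`. -/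
def GofA {N : ℕ} (a : Euc N → Euc N → ℝ → ℝ) (x y : Euc N) (t : ℝ) : ℝ :=
  ∫ τ in (0:ℝ)..t, a x y τ * τ

/-- Assumptions (g1)–(g4) (together with the nonnegativity of `a`),
with constants `gm = g⁻` and `gp = g⁺`. -/
def Hg {N : ℕ} (Ω : Set (Euc N)) (a : Euc N → Euc N → ℝ → ℝ) (gm gp : ℝ) : Prop :=
  (∀ x ∈ Ω, ∀ y ∈ Ω, ∀ t ∈ Ioi (0:ℝ), 0 ≤ a x y t) ∧
  (∀ x ∈ Ω, ∀ y ∈ Ω, Tendsto (fun t => a x y t * t) (𝓝[>] (0:ℝ)) (𝓝 0)) ∧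
  (∀ x ∈ Ω, ∀ y ∈ Ω, Tendsto (fun t => a x y t * t) atTop atTop) ∧
  (∀ x ∈ Ω, ∀ y ∈ Ω, ContinuousOn (fun t => a x y t) (Ioi 0)) ∧
  (∀ x ∈ Ω, ∀ y ∈ Ω, StrictMonoOn (fun t => a x y t * t) (Ioi 0)) ∧
  (1 < gm ∧ gm ≤ gp ∧ ∀ x ∈ Ω, ∀ y ∈ Ω, ∀ t ∈ Ioi (0:ℝ),
    gm ≤ a x y t * t ^ 2 / GofA a x y t ∧ a x y t * t ^ 2 / GofA a x y t ≤ gp)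

/-- The fractional boundedness condition `G ∈ B_f`. -/
def HBf {N : ℕ} (Ω : Set (Euc N)) (a : Euc N → Euc N → ℝ → ℝ) : Prop :=
  ∃ C₁ C₂ : ℝ, 0 < C₁ ∧ 0 < C₂ ∧
    ∀ x ∈ Ω, ∀ y ∈ Ω, C₁ ≤ GofA a x y 1 ∧ GofA a x y 1 ≤ C₂

/-- Assumption (H1): local integrability of `G` and `Ĝ`. -/
def HH1 {N : ℕ} (Ω : Set (Euc N)) (a : Euc N → Euc N → ℝ → ℝ) : Prop :=
  ∀ c : ℝ, 0 < c → ∀ A : Set (Euc N), IsCompact A → A ⊆ Ω →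
    (∫⁻ x in A, ∫⁻ y in A, ENNReal.ofReal (GofA a x y c)) < ⊤ ∧
    (∫⁻ x in A, ENNReal.ofReal (GofA a x x c)) < ⊤

/-- Assumption (H2): translation invariance of `G` along the diagonal. -/
def HH2 {N : ℕ} (a : Euc N → Euc N → ℝ → ℝ) : Prop :=
  ∀ x y z : Euc N, ∀ t : ℝ, 0 ≤ t → GofA a (x - z) (y - z) t = GofA a x y t

/-- The modular `J_Ĝ(u) = ∫_Ω Ĝ(x,|u(x)|) dx`. -/
def modG {N : ℕ} (Ω : Set (Euc N)) (a : Euc N → Euc N → ℝ → ℝ) (u : Euc N → ℝ) : ℝ≥0∞ :=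
  ∫⁻ x in Ω, ENNReal.ofReal (GofA a x x |u x|)

/-- The modular `J_{s,G}(u) = ∫_Ω ∫_Ω G(x,y,|u(x)-u(y)|/|x-y|^s) dx dy /|x-y|^N`. -/
def modFrac {N : ℕ} (Ω : Set (Euc N)) (a : Euc N → Euc N → ℝ → ℝ) (s : ℝ)
    (u : Euc N → ℝ) : ℝ≥0∞ :=
  ∫⁻ x in Ω, ∫⁻ y in Ω,
    ENNReal.ofReal (GofA a x y (|u x - u y| / ‖x - y‖ ^ s) / ‖x - y‖ ^ (N : ℝ))

/-- The Luxemburg norm of `L^Ĝ(Ω)`. -/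
def luxNorm {N : ℕ} (Ω : Set (Euc N)) (a : Euc N → Euc N → ℝ → ℝ) (u : Euc N → ℝ) : ℝ :=
  sInf {l : ℝ | 0 < l ∧ modG Ω a (fun x => u x / l) ≤ 1}

/-- The `(s,G)`-Gagliardo seminorm. -/
def gagSemi {N : ℕ} (Ω : Set (Euc N)) (a : Euc N → Euc N → ℝ → ℝ) (s : ℝ)
    (u : Euc N → ℝ) : ℝ :=
  sInf {l : ℝ | 0 < l ∧ modFrac Ω a s (fun x => u x / l) ≤ 1}

/-- The norm of `W^{s,G}(ℝ^N)`. -/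
def WsGNorm {N : ℕ} (a : Euc N → Euc N → ℝ → ℝ) (s : ℝ) (u : Euc N → ℝ) : ℝ :=
  luxNorm univ a u + gagSemi univ a s u

/-- Membership in the Musielak–Orlicz space `L^Ĝ(Ω)`. -/
def MemLG {N : ℕ} (Ω : Set (Euc N)) (a : Euc N → Euc N → ℝ → ℝ) (u : Euc N → ℝ) : Prop :=
  Measurable u ∧ ∃ l : ℝ, 0 < l ∧ modG Ω a (fun x => l * u x) < ⊤

/-- Membership in the fractional Musielak–Sobolev space `W^{s,G}(Ω)`. -/
def MemWsG {N : ℕ} (Ω : Set (Euc N)) (a : Euc N → Euc N → ℝ → ℝ) (s : ℝ)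
    (u : Euc N → ℝ) : Prop :=
  Measurable u ∧ ∃ l : ℝ, 0 < l ∧ modG Ω a (fun x => l * u x) < ⊤ ∧
    modFrac Ω a s (fun x => l * u x) < ⊤

/-- Membership in `W₀^{s,G}(Ω)`: a `W^{s,G}(ℝ^N)` function vanishing a.e. outside `Ω`. -/
def MemWsG0 {N : ℕ} (Ω : Set (Euc N)) (a : Euc N → Euc N → ℝ → ℝ) (s : ℝ)
    (u : Euc N → ℝ) : Prop :=
  MemWsG univ a s u ∧ ∀ᵐ x : Euc N, x ∉ Ω → u x = 0

/-- `φ ∈ C₀^∞(Ω)`: `φ` is `C^∞` on `ℝ^N` with compact support contained in `Ω`. -/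
def MemCcSmooth {N : ℕ} (Ω : Set (Euc N)) (φ : Euc N → ℝ) : Prop :=
  ContDiff ℝ (⊤ : ℕ∞) φ ∧ IsCompact (tsupport φ) ∧ tsupport φ ⊆ Ω

/-- `Ω ⊆ ℝ^{d+1}` is a hypograph: up to a rigid motion it is the region below the
graph of a continuous function `ξ : ℝ^d → ℝ`. -/
def IsHypograph {d : ℕ} (Ω : Set (Euc (d+1))) : Prop :=
  ∃ (R : Euc (d+1) ≃ᵃⁱ[ℝ] Euc (d+1)) (ξ : Euc d → ℝ),
    Continuous ξ ∧
    R '' Ω = {x : Euc (d+1) | x (Fin.last d) < ξ (WithLp.toLp 2 (fun i : Fin d => x (Fin.castSucc i)))}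



/-! ### Auxiliary lemmas -/

section Ghelp
variable {h : ℝ → ℝ}

lemma h_pos (hmono : StrictMonoOn h (Ioi 0)) (h0 : ∀ t, 0 ≤ t → 0 ≤ h t)
    {t : ℝ} (ht : 0 < t) : 0 < h t :=
  lt_of_le_of_lt (h0 _ (half_pos ht).le) (hmono (half_pos ht) ht (half_lt_self ht))

lemma h_ii (hcont : ContinuousOn h (Ioi 0)) (hmono : StrictMonoOn h (Ioi 0))
    (h0 : ∀ t, 0 ≤ t → 0 ≤ h t)
    {p q : ℝ} (hp : 0 ≤ p) (hpq : p ≤ q) : IntervalIntegrable h volume p q := by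
  rcases eq_or_lt_of_le hpq with rfl | hlt
  · exact IntervalIntegrable.refl
  have hq : 0 < q := lt_of_le_of_lt hp hlt
  rw [intervalIntegrable_iff, uIoc_of_le hpq]
  have hsub : Ioc p q ⊆ Ioi (0:ℝ) := fun τ hτ => lt_of_le_of_lt hp hτ.1
  refine ⟨(hcont.mono hsub).aestronglyMeasurable measurableSet_Ioc,
    HasFiniteIntegral.restrict_of_bounded (C := h q) measure_Ioc_lt_top ?_⟩
  filter_upwards [ae_restrict_mem measurableSet_Ioc] with τ hτ
  have hτ0 : 0 < τ := lt_of_le_of_lt hp hτ.1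
  have h1 : h τ ≤ h q := by
    rcases eq_or_lt_of_le hτ.2 with rfl | hlt2
    · exact le_refl _
    · exact le_of_lt (hmono hτ0 hq hlt2)
  rw [Real.norm_eq_abs, abs_of_nonneg (h0 _ hτ0.le)]
  exact h1

lemma G_nonneg (hcont : ContinuousOn h (Ioi 0)) (hmono : StrictMonoOn h (Ioi 0))
    (h0 : ∀ t, 0 ≤ t → 0 ≤ h t) {t : ℝ} (ht : 0 ≤ t) :
    0 ≤ ∫ τ in (0:ℝ)..t, h τ := by
  exact intervalIntegral.integral_nonneg ht fun τ hτ => h0 _ hτ.1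

lemma G_pos (hcont : ContinuousOn h (Ioi 0)) (hmono : StrictMonoOn h (Ioi 0))
    (h0 : ∀ t, 0 ≤ t → 0 ≤ h t) {t : ℝ} (ht : 0 < t) :
    0 < ∫ τ in (0:ℝ)..t, h τ := by
  have i1 : IntervalIntegrable h volume 0 (t/2) := h_ii hcont hmono h0 le_rfl (half_pos ht).le
  have i2 : IntervalIntegrable h volume (t/2) t := h_ii hcont hmono h0 (half_pos ht).le (half_le_self ht.le)
  rw [← intervalIntegral.integral_add_adjacent_intervals i1 i2]
  have h1 : 0 ≤ ∫ τ in (0:ℝ)..(t/2), h τ := G_nonneg hcont hmono h0 (half_pos ht).le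
  have h2 : (t/2) * h (t/2) ≤ ∫ τ in (t/2)..t, h τ := by
    have := intervalIntegral.integral_mono_on (half_le_self ht.le)
      (intervalIntegrable_const (c := h (t/2))) i2 ?_
    · rw [intervalIntegral.integral_const] at this
      have : (t - t/2) * h (t/2) ≤ ∫ τ in (t/2)..t, h τ := by simpa [smul_eq_mul] using this
      linarith
    · intro τ hτ
      rcases eq_or_lt_of_le hτ.1 with rfl | hlt
      · exact le_refl _
      · exact (hmono (half_pos ht) (lt_of_le_of_lt (half_pos ht).le hlt) hlt).le
  have h3 : 0 < (t/2) * h (t/2) :=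
    mul_pos (half_pos ht) (h_pos hmono h0 (half_pos ht))
  linarith

lemma G_hasDeriv (hcont : ContinuousOn h (Ioi 0)) (hmono : StrictMonoOn h (Ioi 0))
    (h0 : ∀ t, 0 ≤ t → 0 ≤ h t) {t : ℝ} (ht : 0 < t) :
    HasDerivAt (fun u => ∫ τ in (0:ℝ)..u, h τ) (h t) t := by
  refine intervalIntegral.integral_hasDerivAt_right (h_ii hcont hmono h0 le_rfl ht.le)
    (hcont.stronglyMeasurableAtFilter isOpen_Ioi _ ht) ?_
  exact hcont.continuousAt (Ioi_mem_nhds ht)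

lemma G_log_deriv (hcont : ContinuousOn h (Ioi 0)) (hmono : StrictMonoOn h (Ioi 0))
    (h0 : ∀ t, 0 ≤ t → 0 ≤ h t) {p τ : ℝ} (hτ : 0 < τ) :
    HasDerivAt (fun u => Real.log (∫ τ' in (0:ℝ)..u, h τ') - p * Real.log u)
      (h τ / (∫ τ' in (0:ℝ)..τ, h τ') - p * τ⁻¹) τ := by
  have hG : HasDerivAt (fun u => ∫ τ' in (0:ℝ)..u, h τ') (h τ) τ :=
    G_hasDeriv hcont hmono h0 hτ
  have hGpos : 0 < ∫ τ' in (0:ℝ)..τ, h τ' := G_pos hcont hmono h0 hτ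
  exact (hG.log hGpos.ne').sub ((Real.hasDerivAt_log hτ.ne').const_mul p)

lemma G_compare_upper (hcont : ContinuousOn h (Ioi 0)) (hmono : StrictMonoOn h (Ioi 0))
    (h0 : ∀ t, 0 ≤ t → 0 ≤ h t) {c d p : ℝ} (hc : 0 < c) (hcd : c ≤ d)
    (hb : ∀ τ ∈ Icc c d, h τ * τ ≤ p * (∫ τ' in (0:ℝ)..τ, h τ')) :
    (∫ τ in (0:ℝ)..d, h τ) ≤ (∫ τ in (0:ℝ)..c, h τ) * (d/c) ^ p := by
  set G : ℝ → ℝ := fun u => ∫ τ' in (0:ℝ)..u, h τ' with hGdef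
  have hd : 0 < d := lt_of_lt_of_le hc hcd
  have hGc : 0 < G c := G_pos hcont hmono h0 hc
  have hGd : 0 < G d := G_pos hcont hmono h0 hd
  have key : Real.log (G d) - p * Real.log d ≤ Real.log (G c) - p * Real.log c := by
    have anti : AntitoneOn (fun u => Real.log (G u) - p * Real.log u) (Icc c d) := by
      have hder : ∀ τ ∈ Icc c d, HasDerivAt (fun u => Real.log (G u) - p * Real.log u)
          (h τ / G τ - p * τ⁻¹) τ := fun τ hτ =>
        G_log_deriv hcont hmono h0 (lt_of_lt_of_le hc hτ.1)
      refine antitoneOn_of_deriv_nonpos (convex_Icc c d)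
        (fun τ hτ => (hder τ hτ).continuousAt.continuousWithinAt)
        (fun τ hτ => ((hder τ (interior_subset hτ)).differentiableAt).differentiableWithinAt) ?_
      intro τ hτ
      rw [(hder τ (interior_subset hτ)).deriv]
      have hτ0 : 0 < τ := lt_of_lt_of_le hc (interior_subset hτ).1
      have hGτ : 0 < G τ := G_pos hcont hmono h0 hτ0
      have hb' := hb τ (interior_subset hτ)
      have hfrac : h τ / G τ ≤ p / τ := (div_le_div_iff₀ hGτ hτ0).mpr hb'
      have h2 : p * τ⁻¹ = p / τ := by ring
      linarith
    exact anti (left_mem_Icc.mpr hcd) (right_mem_Icc.mpr hcd) hcd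
  have hrpow : 0 < (d/c) ^ p := Real.rpow_pos_of_pos (div_pos hd hc) p
  have : Real.log (G d) ≤ Real.log (G c * (d/c) ^ p) := by
    rw [Real.log_mul hGc.ne' hrpow.ne', Real.log_rpow (div_pos hd hc),
      Real.log_div hd.ne' hc.ne']
    linarith
  exact (Real.log_le_log_iff hGd (mul_pos hGc hrpow)).mp this

lemma G_compare_lower (hcont : ContinuousOn h (Ioi 0)) (hmono : StrictMonoOn h (Ioi 0))
    (h0 : ∀ t, 0 ≤ t → 0 ≤ h t) {c d p : ℝ} (hc : 0 < c) (hcd : c ≤ d)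
    (hb : ∀ τ ∈ Icc c d, p * (∫ τ' in (0:ℝ)..τ, h τ') ≤ h τ * τ) :
    (∫ τ in (0:ℝ)..c, h τ) * (d/c) ^ p ≤ ∫ τ in (0:ℝ)..d, h τ := by
  set G : ℝ → ℝ := fun u => ∫ τ' in (0:ℝ)..u, h τ' with hGdef
  have hd : 0 < d := lt_of_lt_of_le hc hcd
  have hGc : 0 < G c := G_pos hcont hmono h0 hc
  have hGd : 0 < G d := G_pos hcont hmono h0 hd
  have key : Real.log (G c) - p * Real.log c ≤ Real.log (G d) - p * Real.log d := by
    have mono : MonotoneOn (fun u => Real.log (G u) - p * Real.log u) (Icc c d) := by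
      have hder : ∀ τ ∈ Icc c d, HasDerivAt (fun u => Real.log (G u) - p * Real.log u)
          (h τ / G τ - p * τ⁻¹) τ := fun τ hτ =>
        G_log_deriv hcont hmono h0 (lt_of_lt_of_le hc hτ.1)
      refine monotoneOn_of_deriv_nonneg (convex_Icc c d)
        (fun τ hτ => (hder τ hτ).continuousAt.continuousWithinAt)
        (fun τ hτ => ((hder τ (interior_subset hτ)).differentiableAt).differentiableWithinAt) ?_
      intro τ hτ
      rw [(hder τ (interior_subset hτ)).deriv]
      have hτ0 : 0 < τ := lt_of_lt_of_le hc (interior_subset hτ).1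
      have hGτ : 0 < G τ := G_pos hcont hmono h0 hτ0
      have hb' := hb τ (interior_subset hτ)
      have hfrac : p / τ ≤ h τ / G τ := (div_le_div_iff₀ hτ0 hGτ).mpr hb'
      have h2 : p * τ⁻¹ = p / τ := by ring
      linarith
    exact mono (left_mem_Icc.mpr hcd) (right_mem_Icc.mpr hcd) hcd
  have hrpow : 0 < (d/c) ^ p := Real.rpow_pos_of_pos (div_pos hd hc) p
  have : Real.log (G c * (d/c) ^ p) ≤ Real.log (G d) := by
    rw [Real.log_mul hGc.ne' hrpow.ne', Real.log_rpow (div_pos hd hc),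
      Real.log_div hd.ne' hc.ne']
    linarith
  exact (Real.log_le_log_iff (mul_pos hGc hrpow) hGd).mp this

lemma G_growth {gm gp : ℝ} (hcont : ContinuousOn h (Ioi 0)) (hmono : StrictMonoOn h (Ioi 0))
    (h0 : ∀ t, 0 ≤ t → 0 ≤ h t) (hgm : 0 < gm) (hgmp : gm ≤ gp)
    (hg4 : ∀ t, 0 < t → gm ≤ h t * t / (∫ τ in (0:ℝ)..t, h τ) ∧
      h t * t / (∫ τ in (0:ℝ)..t, h τ) ≤ gp)
    {t : ℝ} (ht : 0 ≤ t) :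
    (∫ τ in (0:ℝ)..t, h τ) ≤ (∫ τ in (0:ℝ)..1, h τ) * (t ^ gm + t ^ gp) := by
  set G : ℝ → ℝ := fun u => ∫ τ' in (0:ℝ)..u, h τ' with hGdef
  have hG1 : 0 < G 1 := G_pos hcont hmono h0 one_pos
  rcases eq_or_lt_of_le ht with rfl | htpos
  · simp [G, Real.zero_rpow hgm.ne', Real.zero_rpow (hgm.trans_le hgmp).ne',
      intervalIntegral.integral_same]
  rcases le_total t 1 with ht1 | ht1
  · have hb : ∀ τ ∈ Icc t 1, gm * G τ ≤ h τ * τ := by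
      intro τ hτ
      have hτ0 : 0 < τ := lt_of_lt_of_le htpos hτ.1
      have hGτ : 0 < G τ := G_pos hcont hmono h0 hτ0
      exact (le_div_iff₀ hGτ).mp (hg4 τ hτ0).1
    have := G_compare_lower hcont hmono h0 htpos ht1 hb
    have hkey : G t ≤ G 1 * t ^ gm := by
      have hpow : (1/t) ^ gm * t ^ gm = 1 := by
        rw [← Real.mul_rpow (by positivity) ht]
        rw [one_div_mul_cancel htpos.ne', Real.one_rpow]
      have hpos : 0 < t ^ gm := Real.rpow_pos_of_pos htpos gm
      nlinarith [this, hpos, Real.rpow_pos_of_pos (div_pos one_pos htpos) gm]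
    have : 0 ≤ t ^ gp := Real.rpow_nonneg ht gp
    nlinarith
  · have hb : ∀ τ ∈ Icc 1 t, h τ * τ ≤ gp * G τ := by
      intro τ hτ
      have hτ0 : 0 < τ := lt_of_lt_of_le one_pos hτ.1
      have hGτ : 0 < G τ := G_pos hcont hmono h0 hτ0
      exact (div_le_iff₀ hGτ).mp (hg4 τ hτ0).2
    have := G_compare_upper hcont hmono h0 one_pos ht1 hb
    rw [div_one] at this
    have : G t ≤ G 1 * t ^ gp := this
    have hnn : 0 ≤ t ^ gm := Real.rpow_nonneg ht gm
    nlinarith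

end Ghelp

lemma euc_nontrivial {N : ℕ} (hN : 1 ≤ N) : Nontrivial (Euc N) := by
  refine Module.nontrivial_of_finrank_pos (R := ℝ) (M := Euc N) ?_
  rw [finrank_euclideanSpace_fin]; omega

lemma lint_near {N : ℕ} (hN : 1 ≤ N) {p : ℝ} (hp : -(N:ℝ) < p) :
    ∫⁻ z in Metric.ball (0:Euc N) 1, ENNReal.ofReal (‖z‖ ^ p) < ⊤ := by
  haveI := euc_nontrivial hN
  rcases le_or_gt 0 p with hp0 | hp0
  · calc ∫⁻ z in Metric.ball (0:Euc N) 1, ENNReal.ofReal (‖z‖ ^ p)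
        ≤ ∫⁻ _ in Metric.ball (0:Euc N) 1, 1 := by
          refine setLIntegral_mono' measurableSet_ball fun z hz => ?_
          have h1 : ‖z‖ ^ p ≤ 1 :=
            Real.rpow_le_one (norm_nonneg z) (le_of_lt (mem_ball_zero_iff.mp hz)) hp0
          calc ENNReal.ofReal (‖z‖ ^ p) ≤ ENNReal.ofReal 1 := ENNReal.ofReal_le_ofReal h1
            _ = 1 := ENNReal.ofReal_one
      _ = volume (Metric.ball (0:Euc N) 1) := setLIntegral_one _
      _ < ⊤ := measure_ball_lt_top
  · set x : ℝ := (2:ℝ)⁻¹ with hx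
    have hx0 : (0:ℝ) < x := by norm_num
    have hx1 : x < 1 := by norm_num
    set A : ℕ → Set (Euc N) := fun n =>
      Metric.closedBall 0 (x ^ n) \ Metric.ball 0 (x ^ (n+1)) with hA
    have cover : Metric.ball (0:Euc N) 1 ⊆ {0} ∪ ⋃ n, A n := by
      intro z hz
      rcases eq_or_ne z 0 with rfl | hz0
      · exact Or.inl rfl
      right
      have hzpos : 0 < ‖z‖ := norm_pos_iff.mpr hz0
      have hP : ∃ m : ℕ, x ^ m < ‖z‖ := exists_pow_lt_of_lt_one hzpos hx1
      have hn1 : x ^ (Nat.find hP) < ‖z‖ := Nat.find_spec hP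
      have hnpos : Nat.find hP ≠ 0 := by
        intro h0
        rw [h0, pow_zero] at hn1
        exact absurd (mem_ball_zero_iff.mp hz) (not_lt.mpr hn1.le)
      obtain ⟨k, hk2⟩ := Nat.exists_eq_succ_of_ne_zero hnpos
      have hk : ‖z‖ ≤ x ^ k := not_lt.mp (Nat.find_min hP (by omega))
      refine mem_iUnion.mpr ⟨k, mem_closedBall_zero_iff.mpr hk, fun hball => ?_⟩
      rw [hk2] at hn1
      exact absurd (mem_ball_zero_iff.mp hball) (not_lt.mpr hn1.le)
    set B := volume (Metric.ball (0:Euc N) 1) with hB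
    have hBlt : B < ⊤ := measure_ball_lt_top
    set q : ℝ := x ^ (p + N) with hq
    have hq0 : 0 < q := Real.rpow_pos_of_pos hx0 _
    have hq1 : q < 1 := Real.rpow_lt_one hx0.le hx1 (by linarith)
    have hterm : ∀ n : ℕ, (∫⁻ z in A n, ENNReal.ofReal (‖z‖ ^ p))
        ≤ ENNReal.ofReal (x ^ p * q ^ n) * B := by
      intro n
      have hxn1 : (0:ℝ) < x ^ (n+1) := pow_pos hx0 _
      have hbound : ∀ z ∈ A n, ENNReal.ofReal (‖z‖ ^ p)
          ≤ ENNReal.ofReal ((x ^ (n+1)) ^ p) := by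
        intro z hz
        have h1 : x ^ (n+1) ≤ ‖z‖ := not_lt.mp (fun hc => hz.2 (mem_ball_zero_iff.mpr hc))
        exact ENNReal.ofReal_le_ofReal (Real.rpow_le_rpow_of_nonpos hxn1 h1 hp0.le)
      have hmeas : MeasurableSet (A n) := measurableSet_closedBall.diff measurableSet_ball
      calc (∫⁻ z in A n, ENNReal.ofReal (‖z‖ ^ p))
          ≤ ∫⁻ _ in A n, ENNReal.ofReal ((x ^ (n+1)) ^ p) := setLIntegral_mono' hmeas hbound
        _ = ENNReal.ofReal ((x ^ (n+1)) ^ p) * volume (A n) := setLIntegral_const _ _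
        _ ≤ ENNReal.ofReal ((x ^ (n+1)) ^ p) *
            (ENNReal.ofReal ((x ^ n) ^ N) * B) := by
            gcongr
            have := (volume : Measure (Euc N)).addHaar_closedBall (0 : Euc N)
              (pow_pos hx0 n).le
            rw [finrank_euclideanSpace_fin] at this
            calc volume (A n) ≤ volume (Metric.closedBall (0:Euc N) (x ^ n)) :=
                measure_mono diff_subset
              _ = ENNReal.ofReal ((x ^ n) ^ N) * B := this
        _ = ENNReal.ofReal (x ^ p * q ^ n) * B := by
            rw [← mul_assoc, ← ENNReal.ofReal_mul (by positivity)]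
            congr 2
            have c1 : ((x : ℝ) ^ (n+1)) ^ p = x ^ (((n:ℝ)+1) * p) := by
              rw [← Real.rpow_natCast x (n+1), ← Real.rpow_mul hx0.le]
              push_cast; ring_nf
            have c2 : ((x : ℝ) ^ n) ^ (N : ℕ) = x ^ ((n:ℝ) * N) := by
              rw [← Real.rpow_natCast x n, ← Real.rpow_natCast (x ^ (n:ℝ)) N,
                ← Real.rpow_mul hx0.le]
            have c3 : q ^ n = x ^ ((p + N) * n) := by
              rw [hq, ← Real.rpow_natCast (x ^ (p + (N:ℝ))) n, ← Real.rpow_mul hx0.le]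
            rw [c1, c2, c3, ← Real.rpow_add hx0, ← Real.rpow_add hx0]
            ring_nf
    calc ∫⁻ z in Metric.ball (0:Euc N) 1, ENNReal.ofReal (‖z‖ ^ p)
        ≤ ∫⁻ z in ({0} ∪ ⋃ n, A n), ENNReal.ofReal (‖z‖ ^ p) := lintegral_mono_set cover
      _ ≤ (∫⁻ z in ({0} : Set (Euc N)), ENNReal.ofReal (‖z‖ ^ p)) +
          ∫⁻ z in (⋃ n, A n), ENNReal.ofReal (‖z‖ ^ p) := lintegral_union_le _ _ _
      _ ≤ 0 + ∑' n, ∫⁻ z in A n, ENNReal.ofReal (‖z‖ ^ p) := by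
          gcongr
          · rw [setLIntegral_measure_zero _ _ (measure_singleton 0)]
          · exact lintegral_iUnion_le _ _
      _ ≤ 0 + ∑' n : ℕ, ENNReal.ofReal (x ^ p * q ^ n) * B := by
          gcongr with n
          exact hterm n
      _ < ⊤ := by
          rw [zero_add]
          have : ∀ n : ℕ, ENNReal.ofReal (x ^ p * q ^ n) * B
              = (ENNReal.ofReal (x ^ p) * B) * (ENNReal.ofReal q) ^ n := by
            intro n
            rw [ENNReal.ofReal_mul (by positivity), ENNReal.ofReal_pow hq0.le]
            ring
          rw [tsum_congr this, ENNReal.tsum_mul_left, ENNReal.tsum_geometric]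
          refine ENNReal.mul_lt_top (ENNReal.mul_lt_top ENNReal.ofReal_lt_top hBlt) ?_
          rw [ENNReal.inv_lt_top]
          exact tsub_pos_of_lt (ENNReal.ofReal_lt_one.mpr hq1)

lemma lint_far {N : ℕ} (hN : 1 ≤ N) {q : ℝ} (hq : (N:ℝ) < q) :
    ∫⁻ z in (Metric.ball (0:Euc N) 1)ᶜ, ENNReal.ofReal (‖z‖ ^ (-q)) < ⊤ := by
  have hq0 : 0 < q := lt_of_le_of_lt (by positivity) hq
  have key : ∀ z : Euc N, z ∈ (Metric.ball (0:Euc N) 1)ᶜ →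
      ENNReal.ofReal (‖z‖ ^ (-q)) ≤ ENNReal.ofReal ((2:ℝ) ^ q * (1 + ‖z‖) ^ (-q)) := by
    intro z hz
    have h1 : (1:ℝ) ≤ ‖z‖ := by
      simpa [Metric.mem_ball, not_lt] using hz
    have hz0 : (0:ℝ) < ‖z‖ := lt_of_lt_of_le one_pos h1
    have hle : (1 + ‖z‖) ≤ 2 * ‖z‖ := by linarith
    have h2 : (1 + ‖z‖) ^ q ≤ (2 * ‖z‖) ^ q :=
      Real.rpow_le_rpow (by positivity) hle hq0.le
    have h3 : ((2 * ‖z‖):ℝ) ^ q = 2 ^ q * ‖z‖ ^ q :=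
      Real.mul_rpow (by norm_num) (norm_nonneg z)
    have hp1 : (0:ℝ) < (1 + ‖z‖) ^ q := Real.rpow_pos_of_pos (by positivity) _
    have hp2 : (0:ℝ) < ‖z‖ ^ q := Real.rpow_pos_of_pos hz0 _
    have hp3 : (0:ℝ) < (2:ℝ) ^ q := Real.rpow_pos_of_pos (by norm_num) _
    refine ENNReal.ofReal_le_ofReal ?_
    rw [Real.rpow_neg (norm_nonneg z), Real.rpow_neg (by positivity)]
    have hABC : (1 + ‖z‖) ^ q ≤ 2 ^ q * ‖z‖ ^ q := h3 ▸ h2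
    calc (‖z‖ ^ q)⁻¹ = ((1 + ‖z‖) ^ q)⁻¹ * ((1 + ‖z‖) ^ q * (‖z‖ ^ q)⁻¹) := by
          field_simp
      _ ≤ ((1 + ‖z‖) ^ q)⁻¹ * (2 ^ q * ‖z‖ ^ q * (‖z‖ ^ q)⁻¹) := by
          gcongr
      _ = 2 ^ q * ((1 + ‖z‖) ^ q)⁻¹ := by
          field_simp
  calc ∫⁻ z in (Metric.ball (0:Euc N) 1)ᶜ, ENNReal.ofReal (‖z‖ ^ (-q))
      ≤ ∫⁻ z in (Metric.ball (0:Euc N) 1)ᶜ,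
        ENNReal.ofReal ((2:ℝ) ^ q * (1 + ‖z‖) ^ (-q)) :=
        setLIntegral_mono' measurableSet_ball.compl key
    _ ≤ ∫⁻ z : Euc N, ENNReal.ofReal ((2:ℝ) ^ q * (1 + ‖z‖) ^ (-q)) :=
        setLIntegral_le_lintegral _ _
    _ = ENNReal.ofReal ((2:ℝ) ^ q) * ∫⁻ z : Euc N, ENNReal.ofReal ((1 + ‖z‖) ^ (-q)) := by
        rw [← lintegral_const_mul' _ _ ENNReal.ofReal_ne_top]
        congr 1
        ext z
        rw [← ENNReal.ofReal_mul (by positivity)]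
    _ < ⊤ := by
        refine ENNReal.mul_lt_top ENNReal.ofReal_lt_top ?_
        have := finite_integral_one_add_norm (E := Euc N) (μ := volume) (r := q) ?_
        · exact this
        · rw [finrank_euclideanSpace_fin]; exact hq

lemma GofA_le {N : ℕ} {Ω : Set (Euc N)} {a : Euc N → Euc N → ℝ → ℝ} {gm gp : ℝ}
    (hg : Hg Ω a gm gp) {C₂ : ℝ}
    (hC : ∀ x ∈ Ω, ∀ y ∈ Ω, GofA a x y 1 ≤ C₂)
    {x y : Euc N} (hx : x ∈ Ω) (hy : y ∈ Ω) {t : ℝ} (ht : 0 ≤ t) :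
    GofA a x y t ≤ C₂ * (t ^ gm + t ^ gp) := by
  obtain ⟨ha0, -, -, hcont, hmono, hgm, hgmp, hg4⟩ := hg
  set h : ℝ → ℝ := fun τ => a x y τ * τ with hh
  have hcont' : ContinuousOn h (Ioi 0) := (hcont x hx y hy).mul continuousOn_id
  have hmono' : StrictMonoOn h (Ioi 0) := hmono x hx y hy
  have h0 : ∀ t, 0 ≤ t → 0 ≤ h t := by
    intro t ht0
    rcases eq_or_lt_of_le ht0 with rfl | ht0
    · simp [hh]
    · exact mul_nonneg (ha0 x hx y hy t ht0) ht0.le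
  have hg4' : ∀ t, 0 < t → gm ≤ h t * t / (∫ τ in (0:ℝ)..t, h τ) ∧
      h t * t / (∫ τ in (0:ℝ)..t, h τ) ≤ gp := by
    intro t ht0
    have := hg4 x hx y hy t ht0
    have he : a x y t * t ^ 2 = h t * t := by simp only [hh]; ring
    have he2 : GofA a x y t = ∫ τ in (0:ℝ)..t, h τ := rfl
    rw [he, he2] at this
    exact this
  have hgm0 : (0:ℝ) < gm := lt_trans one_pos hgm
  have key := G_growth hcont' hmono' h0 hgm0 hgmp hg4' ht
  have h1 : (∫ τ in (0:ℝ)..1, h τ) ≤ C₂ := hC x hx y hy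
  have hpos : 0 ≤ t ^ gm + t ^ gp :=
    add_nonneg (Real.rpow_nonneg ht _) (Real.rpow_nonneg ht _)
  calc GofA a x y t = ∫ τ in (0:ℝ)..t, h τ := rfl
    _ ≤ (∫ τ in (0:ℝ)..1, h τ) * (t ^ gm + t ^ gp) := key
    _ ≤ C₂ * (t ^ gm + t ^ gp) := mul_le_mul_of_nonneg_right h1 hpos


set_option maxHeartbeats 2000000 in
/-- for `u ∈ C₀^∞(Ω)`, assuming (g1)–(g4) and `G ∈ B_f`, the modular
`∫_Ω ∫_Ω G(x,y,|u(x)-u(y)|/|x-y|^s) dx dy / |x-y|^N` is finite. -/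
theorem stmt_4 {N : ℕ} (hN : 1 ≤ N) (s : ℝ) (hs : s ∈ Set.Ioo (0:ℝ) 1)
    (Ω : Set (Euc N)) (hΩ : IsOpen Ω)
    (a : Euc N → Euc N → ℝ → ℝ) (gm gp : ℝ) (hg : Hg Ω a gm gp) (hBf : HBf Ω a)
    (u : Euc N → ℝ) (hu : MemCcSmooth Ω u) :
    modFrac Ω a s u < ⊤ := by
  obtain ⟨C₁, C₂, hC₁0, hC₂0, hC⟩ := hBf
  have hC2 : ∀ x ∈ Ω, ∀ y ∈ Ω, GofA a x y 1 ≤ C₂ := fun x hx y hy => (hC x hx y hy).2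
  have hgm1 : 1 < gm := hg.2.2.2.2.2.1
  have hgmp : gm ≤ gp := hg.2.2.2.2.2.2.1
  have hgm0 : (0:ℝ) < gm := lt_trans one_pos hgm1
  have hgp0 : (0:ℝ) < gp := lt_of_lt_of_le hgm0 hgmp
  have hs0 : (0:ℝ) < s := hs.1
  have h1s : (0:ℝ) < 1 - s := by linarith [hs.2]
  -- properties of u
  have hsmooth := hu.1
  have hcs : HasCompactSupport u := hu.2.1
  obtain ⟨Lnn, hLip⟩ := hsmooth.lipschitzWith_of_hasCompactSupport hcs (by simp)
  set L : ℝ := (Lnn : ℝ) with hLdef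
  have hL0 : 0 ≤ L := Lnn.coe_nonneg
  obtain ⟨M, hM⟩ := hcs.exists_bound_of_continuous hsmooth.continuous
  have hM0 : 0 ≤ M := le_trans (norm_nonneg (u 0)) (hM 0)
  set K := tsupport u with hKdef
  have hKm : MeasurableSet K := (isClosed_tsupport u).measurableSet
  have hKc : IsCompact K := hu.2.1
  -- the radial majorant
  set m : ℝ → ℝ := fun r => min (L * r ^ (1-s)) (2 * M * r ^ (-s)) with hm
  set Fr : ℝ → ℝ := fun r => C₂ * (m r ^ gm + m r ^ gp) / r ^ (N:ℝ) with hFrdef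
  set F : Euc N → ℝ≥0∞ := fun z => ENNReal.ofReal (Fr ‖z‖) with hFdef
  set ind : Euc N → ℝ≥0∞ := K.indicator 1 with hind
  have hFr_meas : Measurable Fr := by fun_prop
  have hF_meas : Measurable F := ENNReal.measurable_ofReal.comp (hFr_meas.comp measurable_norm)
  have hind_meas : Measurable ind := measurable_one.indicator hKm
  have hind_ne_top : ∀ x, ind x ≠ ⊤ := by
    intro x
    rw [hind]
    by_cases hxK : x ∈ K <;>
      simp [Set.indicator_of_mem, Set.indicator_of_notMem, hxK]
  set I₀ : ℝ≥0∞ := ∫⁻ z : Euc N, F z with hI₀def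
  -- pointwise bound
  have hpt : ∀ x ∈ Ω, ∀ y ∈ Ω,
      ENNReal.ofReal (GofA a x y (|u x - u y| / ‖x - y‖ ^ s) / ‖x - y‖ ^ (N:ℝ))
        ≤ ind x * F (x - y) + ind y * F (x - y) := by
    intro x hx y hy
    by_cases hxy : x = y
    · subst hxy
      simp [GofA, Real.zero_rpow hs0.ne', intervalIntegral.integral_same]
    have hr0 : 0 < ‖x - y‖ := by rw [norm_pos_iff]; exact sub_ne_zero.mpr hxy
    by_cases hmem : x ∈ K ∨ y ∈ K
    · -- core estimate
      have hrs : 0 < ‖x - y‖ ^ s := Real.rpow_pos_of_pos hr0 s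
      set t : ℝ := |u x - u y| / ‖x - y‖ ^ s with ht
      have ht0 : 0 ≤ t := div_nonneg (abs_nonneg _) hrs.le
      have hlip' : |u x - u y| ≤ L * ‖x - y‖ := by
        have h1 := hLip.dist_le_mul x y
        rwa [Real.dist_eq, dist_eq_norm] at h1
      have ht1 : t ≤ L * ‖x - y‖ ^ (1-s) := by
        rw [ht, div_le_iff₀ hrs]
        calc |u x - u y| ≤ L * ‖x - y‖ := hlip'
          _ = L * ‖x - y‖ ^ (1-s) * ‖x - y‖ ^ s := by
              rw [mul_assoc, ← Real.rpow_add hr0]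
              norm_num
      have ht2 : t ≤ 2 * M * ‖x - y‖ ^ (-s) := by
        have h2M : |u x - u y| ≤ 2 * M := by
          have ha : |u x| ≤ M := by rw [← Real.norm_eq_abs]; exact hM x
          have hb : |u y| ≤ M := by rw [← Real.norm_eq_abs]; exact hM y
          calc |u x - u y| ≤ |u x| + |u y| := abs_sub _ _
            _ ≤ 2 * M := by linarith
        rw [ht, div_le_iff₀ hrs, Real.rpow_neg hr0.le]
        calc |u x - u y| ≤ 2 * M := h2M
          _ = 2 * M * (‖x - y‖ ^ s)⁻¹ * ‖x - y‖ ^ s := by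
              field_simp
      have htm : t ≤ m ‖x - y‖ := le_min ht1 ht2
      have hGb : GofA a x y t ≤ C₂ * (t ^ gm + t ^ gp) := GofA_le hg hC2 hx hy ht0
      have hcore : GofA a x y t / ‖x - y‖ ^ (N:ℝ) ≤ Fr ‖x - y‖ := by
        rw [hFrdef]
        have hrN : 0 < ‖x - y‖ ^ (N:ℝ) := Real.rpow_pos_of_pos hr0 _
        apply div_le_div_of_nonneg_right ?_ hrN.le
        calc GofA a x y t ≤ C₂ * (t ^ gm + t ^ gp) := hGb
          _ ≤ C₂ * (m ‖x - y‖ ^ gm + m ‖x - y‖ ^ gp) := by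
              have e1 : t ^ gm ≤ m ‖x - y‖ ^ gm := Real.rpow_le_rpow ht0 htm hgm0.le
              have e2 : t ^ gp ≤ m ‖x - y‖ ^ gp := Real.rpow_le_rpow ht0 htm hgp0.le
              nlinarith
      have hFxy : ENNReal.ofReal (GofA a x y t / ‖x - y‖ ^ (N:ℝ)) ≤ F (x - y) :=
        ENNReal.ofReal_le_ofReal hcore
      rcases hmem with hxK | hyK
      · calc ENNReal.ofReal (GofA a x y t / ‖x - y‖ ^ (N:ℝ)) ≤ F (x - y) := hFxy
          _ = ind x * F (x - y) := by rw [hind, Set.indicator_of_mem hxK]; simp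
          _ ≤ ind x * F (x - y) + ind y * F (x - y) := le_self_add
      · calc ENNReal.ofReal (GofA a x y t / ‖x - y‖ ^ (N:ℝ)) ≤ F (x - y) := hFxy
          _ = ind y * F (x - y) := by rw [hind, Set.indicator_of_mem hyK]; simp
          _ ≤ ind x * F (x - y) + ind y * F (x - y) := le_add_self
    · push_neg at hmem
      have hux : u x = 0 := image_eq_zero_of_notMem_tsupport hmem.1
      have huy : u y = 0 := image_eq_zero_of_notMem_tsupport hmem.2
      simp [hux, huy, GofA, intervalIntegral.integral_same]
  -- assembling the integral bound
  have step1 : modFrac Ω a s u ≤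
      ∫⁻ x : Euc N, ∫⁻ y : Euc N, (ind x * F (x - y) + ind y * F (x - y)) := by
    calc modFrac Ω a s u
        ≤ ∫⁻ x in Ω, ∫⁻ y in Ω, (ind x * F (x - y) + ind y * F (x - y)) := by
          refine setLIntegral_mono' hΩ.measurableSet fun x hx => ?_
          exact setLIntegral_mono' hΩ.measurableSet fun y hy => hpt x hx y hy
      _ ≤ ∫⁻ x in Ω, ∫⁻ y : Euc N, (ind x * F (x - y) + ind y * F (x - y)) :=
          setLIntegral_mono' hΩ.measurableSet fun x _ => setLIntegral_le_lintegral _ _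
      _ ≤ ∫⁻ x : Euc N, ∫⁻ y : Euc N, (ind x * F (x - y) + ind y * F (x - y)) :=
          setLIntegral_le_lintegral _ _
  have Ftrans : ∀ x : Euc N, (∫⁻ y : Euc N, F (x - y)) = I₀ := by
    intro x
    have hsymm : ∀ y : Euc N, F (x - y) = F (y - x) := fun y => by
      rw [hFdef]; simp [norm_sub_rev]
    simp_rw [hsymm]
    exact lintegral_sub_right_eq_self F x
  have inner_eq : ∀ x : Euc N, (∫⁻ y : Euc N, (ind x * F (x - y) + ind y * F (x - y)))
      = ind x * I₀ + ∫⁻ y : Euc N, ind y * F (x - y) := by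
    intro x
    have hmeasf : Measurable fun y : Euc N => ind x * F (x - y) := by
      apply Measurable.const_mul
      exact hF_meas.comp (measurable_const.sub measurable_id)
    rw [lintegral_add_left hmeasf]
    congr 1
    rw [lintegral_const_mul' _ _ (hind_ne_top x), Ftrans x]
  have hind_I : (∫⁻ x : Euc N, ind x * I₀) = I₀ * volume K := by
    calc (∫⁻ x : Euc N, ind x * I₀)
        = ∫⁻ x : Euc N, K.indicator (fun _ => I₀) x := by
          congr 1
          funext x
          rw [hind]
          by_cases hxK : x ∈ K <;>
            simp [Set.indicator_of_mem, Set.indicator_of_notMem, hxK]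
      _ = I₀ * volume K := lintegral_indicator_const hKm I₀
  have swap_eq : (∫⁻ x : Euc N, ∫⁻ y : Euc N, ind y * F (x - y)) = I₀ * volume K := by
    rw [lintegral_lintegral_swap]
    · have hin : ∀ y : Euc N, (∫⁻ x : Euc N, ind y * F (x - y)) = ind y * I₀ := by
        intro y
        rw [lintegral_const_mul' _ _ (hind_ne_top y)]
        congr 1
        exact lintegral_sub_right_eq_self F y
      simp_rw [hin]
      exact hind_I
    · exact ((hind_meas.comp measurable_snd).mul
        (hF_meas.comp (measurable_fst.sub measurable_snd))).aemeasurable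
  have total : (∫⁻ x : Euc N, ∫⁻ y : Euc N, (ind x * F (x - y) + ind y * F (x - y)))
      = I₀ * volume K + I₀ * volume K := by
    simp_rw [inner_eq]
    rw [lintegral_add_left (hind_meas.mul_const I₀), hind_I, swap_eq]
  -- finiteness of I₀
  set p : ℝ := (1-s)*gm - N with hpdef
  set q : ℝ := s*gm + N with hqdef
  have hpN : -(N:ℝ) < p := by
    have : 0 < (1-s)*gm := mul_pos h1s hgm0
    rw [hpdef]; linarith
  have hqN : (N:ℝ) < q := by
    have : 0 < s*gm := mul_pos hs0 hgm0
    rw [hqdef]; linarith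
  set C₃ : ℝ := C₂ * (L ^ gm + L ^ gp) with hC₃def
  set C₄ : ℝ := C₂ * ((2*M) ^ gm + (2*M) ^ gp) with hC₄def
  have hnear : ∀ z ∈ Metric.ball (0:Euc N) 1,
      F z ≤ ENNReal.ofReal C₃ * ENNReal.ofReal (‖z‖ ^ p) := by
    intro z hz
    rcases eq_or_ne z 0 with rfl | hz0
    · have hF0 : F 0 = 0 := by
        rw [hFdef]
        simp [hFrdef, hm, Real.zero_rpow h1s.ne', Real.zero_rpow (neg_ne_zero.mpr hs0.ne'),
          Real.zero_rpow hgm0.ne', Real.zero_rpow hgp0.ne']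
      rw [hF0]; exact zero_le'
    · have hr0 : 0 < ‖z‖ := norm_pos_iff.mpr hz0
      have hr1 : ‖z‖ < 1 := mem_ball_zero_iff.mp hz
      have hmle : m ‖z‖ ≤ L * ‖z‖ ^ (1-s) := min_le_left _ _
      have hmnn : 0 ≤ m ‖z‖ := le_min (by positivity) (by positivity)
      have e1 : (L * ‖z‖ ^ (1-s)) ^ gm = L ^ gm * ‖z‖ ^ ((1-s)*gm) := by
        rw [Real.mul_rpow hL0 (Real.rpow_nonneg hr0.le _), ← Real.rpow_mul hr0.le]
      have e2 : (L * ‖z‖ ^ (1-s)) ^ gp = L ^ gp * ‖z‖ ^ ((1-s)*gp) := by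
        rw [Real.mul_rpow hL0 (Real.rpow_nonneg hr0.le _), ← Real.rpow_mul hr0.le]
      have hb1 : m ‖z‖ ^ gm ≤ L ^ gm * ‖z‖ ^ ((1-s)*gm) := by
        rw [← e1]; exact Real.rpow_le_rpow hmnn hmle hgm0.le
      have hb2 : m ‖z‖ ^ gp ≤ L ^ gp * ‖z‖ ^ ((1-s)*gp) := by
        rw [← e2]; exact Real.rpow_le_rpow hmnn hmle hgp0.le
      have hexp : ‖z‖ ^ ((1-s)*gp) ≤ ‖z‖ ^ ((1-s)*gm) :=
        Real.rpow_le_rpow_of_exponent_ge hr0 hr1.le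
          (mul_le_mul_of_nonneg_left hgmp h1s.le)
      have hnum : m ‖z‖ ^ gm + m ‖z‖ ^ gp ≤ (L ^ gm + L ^ gp) * ‖z‖ ^ ((1-s)*gm) := by
        have h3 : L ^ gp * ‖z‖ ^ ((1-s)*gp) ≤ L ^ gp * ‖z‖ ^ ((1-s)*gm) :=
          mul_le_mul_of_nonneg_left hexp (Real.rpow_nonneg hL0 _)
        nlinarith
      have key : Fr ‖z‖ ≤ C₃ * ‖z‖ ^ p := by
        rw [hFrdef]
        have hrN : 0 < ‖z‖ ^ (N:ℝ) := Real.rpow_pos_of_pos hr0 _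
        calc C₂ * (m ‖z‖ ^ gm + m ‖z‖ ^ gp) / ‖z‖ ^ (N:ℝ)
            ≤ C₂ * ((L ^ gm + L ^ gp) * ‖z‖ ^ ((1-s)*gm)) / ‖z‖ ^ (N:ℝ) := by
              apply div_le_div_of_nonneg_right ?_ hrN.le
              exact mul_le_mul_of_nonneg_left hnum hC₂0.le
          _ = C₃ * ‖z‖ ^ p := by
              rw [hC₃def, hpdef, Real.rpow_sub hr0]
              ring
      calc F z = ENNReal.ofReal (Fr ‖z‖) := rfl
        _ ≤ ENNReal.ofReal (C₃ * ‖z‖ ^ p) := ENNReal.ofReal_le_ofReal key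
        _ = ENNReal.ofReal C₃ * ENNReal.ofReal (‖z‖ ^ p) :=
            ENNReal.ofReal_mul (by positivity)
  have hfar : ∀ z ∈ (Metric.ball (0:Euc N) 1)ᶜ,
      F z ≤ ENNReal.ofReal C₄ * ENNReal.ofReal (‖z‖ ^ (-q)) := by
    intro z hz
    have hr1 : (1:ℝ) ≤ ‖z‖ := by simpa [Metric.mem_ball, not_lt] using hz
    have hr0 : 0 < ‖z‖ := lt_of_lt_of_le one_pos hr1
    have hmle : m ‖z‖ ≤ 2 * M * ‖z‖ ^ (-s) := min_le_right _ _
    have hmnn : 0 ≤ m ‖z‖ := le_min (by positivity) (by positivity)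
    have e1 : (2 * M * ‖z‖ ^ (-s)) ^ gm = (2*M) ^ gm * ‖z‖ ^ (-s*gm) := by
      rw [Real.mul_rpow (by positivity) (Real.rpow_nonneg hr0.le _), ← Real.rpow_mul hr0.le]
    have e2 : (2 * M * ‖z‖ ^ (-s)) ^ gp = (2*M) ^ gp * ‖z‖ ^ (-s*gp) := by
      rw [Real.mul_rpow (by positivity) (Real.rpow_nonneg hr0.le _), ← Real.rpow_mul hr0.le]
    have hb1 : m ‖z‖ ^ gm ≤ (2*M) ^ gm * ‖z‖ ^ (-s*gm) := by
      rw [← e1]; exact Real.rpow_le_rpow hmnn hmle hgm0.le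
    have hb2 : m ‖z‖ ^ gp ≤ (2*M) ^ gp * ‖z‖ ^ (-s*gp) := by
      rw [← e2]; exact Real.rpow_le_rpow hmnn hmle hgp0.le
    have hexp : ‖z‖ ^ (-s*gp) ≤ ‖z‖ ^ (-s*gm) :=
      Real.rpow_le_rpow_of_exponent_le hr1 (by nlinarith)
    have hnum : m ‖z‖ ^ gm + m ‖z‖ ^ gp ≤ ((2*M) ^ gm + (2*M) ^ gp) * ‖z‖ ^ (-s*gm) := by
      have h3 : (2*M) ^ gp * ‖z‖ ^ (-s*gp) ≤ (2*M) ^ gp * ‖z‖ ^ (-s*gm) :=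
        mul_le_mul_of_nonneg_left hexp (Real.rpow_nonneg (by positivity) _)
      nlinarith
    have key : Fr ‖z‖ ≤ C₄ * ‖z‖ ^ (-q) := by
      rw [hFrdef]
      have hrN : 0 < ‖z‖ ^ (N:ℝ) := Real.rpow_pos_of_pos hr0 _
      calc C₂ * (m ‖z‖ ^ gm + m ‖z‖ ^ gp) / ‖z‖ ^ (N:ℝ)
          ≤ C₂ * (((2*M) ^ gm + (2*M) ^ gp) * ‖z‖ ^ (-s*gm)) / ‖z‖ ^ (N:ℝ) := by
            apply div_le_div_of_nonneg_right ?_ hrN.le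
            exact mul_le_mul_of_nonneg_left hnum hC₂0.le
        _ = C₄ * ‖z‖ ^ (-q) := by
            rw [hC₄def, hqdef]
            have : -(s*gm + (N:ℝ)) = -s*gm - N := by ring
            rw [this, Real.rpow_sub hr0]
            ring
    calc F z = ENNReal.ofReal (Fr ‖z‖) := rfl
      _ ≤ ENNReal.ofReal (C₄ * ‖z‖ ^ (-q)) := ENNReal.ofReal_le_ofReal key
      _ = ENNReal.ofReal C₄ * ENNReal.ofReal (‖z‖ ^ (-q)) :=
          ENNReal.ofReal_mul (by positivity)
  have hI₀ : I₀ < ⊤ := by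
    rw [hI₀def, ← lintegral_add_compl F (measurableSet_ball
      (x := (0:Euc N)) (ε := (1:ℝ)))]
    refine ENNReal.add_lt_top.mpr ⟨?_, ?_⟩
    · calc ∫⁻ z in Metric.ball (0:Euc N) 1, F z
          ≤ ∫⁻ z in Metric.ball (0:Euc N) 1,
            ENNReal.ofReal C₃ * ENNReal.ofReal (‖z‖ ^ p) :=
            setLIntegral_mono' measurableSet_ball hnear
        _ = ENNReal.ofReal C₃ * ∫⁻ z in Metric.ball (0:Euc N) 1,
            ENNReal.ofReal (‖z‖ ^ p) :=
            lintegral_const_mul' _ _ ENNReal.ofReal_ne_top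
        _ < ⊤ := ENNReal.mul_lt_top ENNReal.ofReal_lt_top (lint_near hN hpN)
    · calc ∫⁻ z in (Metric.ball (0:Euc N) 1)ᶜ, F z
          ≤ ∫⁻ z in (Metric.ball (0:Euc N) 1)ᶜ,
            ENNReal.ofReal C₄ * ENNReal.ofReal (‖z‖ ^ (-q)) :=
            setLIntegral_mono' measurableSet_ball.compl hfar
        _ = ENNReal.ofReal C₄ * ∫⁻ z in (Metric.ball (0:Euc N) 1)ᶜ,
            ENNReal.ofReal (‖z‖ ^ (-q)) :=
            lintegral_const_mul' _ _ ENNReal.ofReal_ne_top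
        _ < ⊤ := ENNReal.mul_lt_top ENNReal.ofReal_lt_top (lint_far hN hqN)
  have hKfin : volume K < ⊤ := hKc.measure_lt_top
  calc modFrac Ω a s u
      ≤ I₀ * volume K + I₀ * volume K := by rw [← total]; exact step1
    _ < ⊤ := by
        have := ENNReal.mul_lt_top hI₀ hKfin
        exact ENNReal.add_lt_top.mpr ⟨this, this⟩



end
end

section
/- Assume (g1)–(g4) and that Ĝ satisfies the local integrability condition: ∫_A Ĝ(x,c) dx < ∞ for every c > 0 and every compact A ⊆ Ω. Let u : Ω → ℝ be bounded and measurable with compact support contained in Ω. For h ∈ ℝ^N define T_h u(x) := u(x+h) if x ∈ Ω and x+h ∈ Ω, and T_h u(x) := 0 otherwise. Then for every ε > 0 there exists η = η(ε) > 0 such that for all h ∈ ℝ^N with |h| < η one has ‖T_h u − u‖_{L^Ĝ(Ω)} < ε. -/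
open MeasureTheory Set Filter Topology
open scoped ENNReal Pointwise

noncomputable section

section auxG

variable {f : ℝ → ℝ}

lemma aux_monoOn (h0 : f 0 = 0) (hpos : ∀ t ∈ Ioi (0:ℝ), 0 ≤ f t)
    (hsm : StrictMonoOn f (Ioi 0)) : MonotoneOn f (Ici 0) := by
  intro s hs t ht hst
  rcases eq_or_lt_of_le (show (0:ℝ) ≤ s from hs) with h | h
  · rw [← h, h0]
    rcases eq_or_lt_of_le (show (0:ℝ) ≤ t from ht) with h' | h'
    · rw [← h', h0]
    · exact hpos t h'
  · exact (hsm.monotoneOn) h (lt_of_lt_of_le h hst) hst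

lemma aux_intble (hf : MonotoneOn f (Ici 0)) {s t : ℝ} (hs : 0 ≤ s) (hst : s ≤ t) :
    IntervalIntegrable f volume s t := by
  apply MonotoneOn.intervalIntegrable
  apply hf.mono
  rw [uIcc_of_le hst]
  exact fun x hx => le_trans hs hx.1

lemma aux_nonneg (hf : MonotoneOn f (Ici 0)) (h0 : f 0 = 0) {t : ℝ} (ht : 0 ≤ t) :
    0 ≤ f t := h0 ▸ hf (self_mem_Ici) ht ht

lemma auxG_nonneg (hf : MonotoneOn f (Ici 0)) (h0 : f 0 = 0) {t : ℝ} (ht : 0 ≤ t) :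
    0 ≤ ∫ τ in (0:ℝ)..t, f τ :=
  intervalIntegral.integral_nonneg ht (fun x hx => aux_nonneg hf h0 hx.1)

lemma auxG_mono (hf : MonotoneOn f (Ici 0)) (h0 : f 0 = 0) {s t : ℝ} (hs : 0 ≤ s)
    (hst : s ≤ t) : (∫ τ in (0:ℝ)..s, f τ) ≤ ∫ τ in (0:ℝ)..t, f τ := by
  have hsplit := intervalIntegral.integral_add_adjacent_intervals
    (aux_intble hf le_rfl hs) (aux_intble hf hs hst)
  have hnn : 0 ≤ ∫ τ in s..t, f τ :=
    intervalIntegral.integral_nonneg hst (fun x hx => aux_nonneg hf h0 (le_trans hs hx.1))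
  linarith

lemma auxG_scale (hf : MonotoneOn f (Ici 0)) (h0 : f 0 = 0) {lam t : ℝ}
    (h0l : 0 ≤ lam) (h1l : lam ≤ 1) (ht : 0 ≤ t) :
    (∫ τ in (0:ℝ)..(lam * t), f τ) ≤ lam * ∫ τ in (0:ℝ)..t, f τ := by
  set c := lam * t with hc
  have hc0 : 0 ≤ c := mul_nonneg h0l ht
  have hct : c ≤ t := by nlinarith
  have hfc : 0 ≤ f c := aux_nonneg hf h0 hc0
  have hsplit := intervalIntegral.integral_add_adjacent_intervals
    (aux_intble hf le_rfl hc0) (aux_intble hf hc0 hct)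
  have hA : (∫ τ in (0:ℝ)..c, f τ) ≤ f c * c := by
    have := intervalIntegral.integral_mono_on hc0 (aux_intble hf le_rfl hc0)
      (intervalIntegrable_const) (fun x hx => hf hx.1 hc0 hx.2)
    simpa [intervalIntegral.integral_const, mul_comm] using this
  have hB : f c * (t - c) ≤ ∫ τ in c..t, f τ := by
    have := intervalIntegral.integral_mono_on hct (intervalIntegrable_const)
      (aux_intble hf hc0 hct) (fun x hx => hf hc0 (le_trans hc0 hx.1) hx.1)
    simpa [intervalIntegral.integral_const, mul_comm] using this
  have hX : 0 ≤ ∫ τ in (0:ℝ)..c, f τ := auxG_nonneg hf h0 hc0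
  nlinarith [mul_nonneg (sub_nonneg.mpr h1l) hX,
    mul_nonneg (sub_nonneg.mpr h1l) (mul_nonneg hfc hc0)]

end auxG

lemma aux_l1_translation {N : ℕ} (u : Euc N → ℝ) (hmeas : Measurable u)
    (hu : Integrable u (volume : Measure (Euc N))) {θ : ℝ} (hθ : 0 < θ) :
    ∃ η : ℝ, 0 < η ∧ ∀ h : Euc N, ‖h‖ < η →
      (∫⁻ x, ENNReal.ofReal |u (x + h) - u x|) < ENNReal.ofReal θ := by
  obtain ⟨g, gsupp, hclose, gcont, _⟩ :=
    hu.exists_hasCompactSupport_lintegral_sub_le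
      (ε := ENNReal.ofReal (θ/4)) (by positivity)
  set Kg := Metric.cthickening 1 (tsupport g) with hKg
  have hKgc : IsCompact Kg := gsupp.cthickening
  have hKgm : MeasurableSet Kg := (Metric.isClosed_cthickening).measurableSet
  set V : ℝ := (volume Kg).toReal + 1 with hV
  have hVpos : 0 < V := by positivity
  set εg : ℝ := θ / (4 * V) with hεg
  have hεgpos : 0 < εg := by positivity
  have ucont : UniformContinuous g := gsupp.uniformContinuous_of_continuous gcont
  obtain ⟨δg, δgpos, hδg⟩ := Metric.uniformContinuous_iff.mp ucont εg hεgpos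
  refine ⟨min δg 1, by positivity, fun h hh => ?_⟩
  have hhδg : ‖h‖ < δg := lt_of_lt_of_le hh (min_le_left _ _)
  have hh1 : ‖h‖ ≤ 1 := le_of_lt (lt_of_lt_of_le hh (min_le_right _ _))
  have hmid : ∀ x : Euc N, ENNReal.ofReal |g (x + h) - g x| ≤
      Kg.indicator (fun _ => ENNReal.ofReal εg) x := by
    intro x
    by_cases hx : x ∈ Kg
    · rw [Set.indicator_of_mem hx]
      apply ENNReal.ofReal_le_ofReal
      have : dist (x + h) x < δg := by
        rw [dist_eq_norm]
        simpa using hhδg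
      have := hδg this
      rw [Real.dist_eq] at this
      exact this.le
    · rw [Set.indicator_of_notMem hx]
      have hgx : g x = 0 := by
        apply image_eq_zero_of_notMem_tsupport
        exact fun hmem => hx (Metric.self_subset_cthickening _ hmem)
      have hgxh : g (x + h) = 0 := by
        apply image_eq_zero_of_notMem_tsupport
        intro hmem
        apply hx
        apply Metric.mem_cthickening_of_dist_le x (x + h) 1 _ hmem
        rw [dist_eq_norm]
        simpa using hh1
      simp [hgx, hgxh]
  have hvol : volume Kg ≤ ENNReal.ofReal V := by
    rw [hV]
    calc volume Kg = ENNReal.ofReal (volume Kg).toReal := by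
          rw [ENNReal.ofReal_toReal hKgc.measure_lt_top.ne]
      _ ≤ _ := ENNReal.ofReal_le_ofReal (by linarith)
  have hmid2 : (∫⁻ x, ENNReal.ofReal |g (x + h) - g x|) ≤ ENNReal.ofReal (θ/4) := by
    calc (∫⁻ x, ENNReal.ofReal |g (x + h) - g x|)
        ≤ ∫⁻ x, Kg.indicator (fun _ => ENNReal.ofReal εg) x := lintegral_mono hmid
      _ = ENNReal.ofReal εg * volume Kg := lintegral_indicator_const hKgm _
      _ ≤ ENNReal.ofReal εg * ENNReal.ofReal V := by gcongr
      _ = ENNReal.ofReal (εg * V) := (ENNReal.ofReal_mul hεgpos.le).symm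
      _ = ENNReal.ofReal (θ/4) := by
          congr 1
          rw [hεg]; field_simp
  have key : ∀ x : Euc N, ENNReal.ofReal |u (x + h) - u x| ≤
      ENNReal.ofReal |u (x + h) - g (x + h)| + ENNReal.ofReal |g (x + h) - g x|
        + ENNReal.ofReal |g x - u x| := by
    intro x
    calc ENNReal.ofReal |u (x + h) - u x|
        ≤ ENNReal.ofReal (|u (x + h) - g (x + h)| + |g (x + h) - g x| + |g x - u x|) := by
          apply ENNReal.ofReal_le_ofReal
          have := abs_sub_abs_le_abs_sub (u (x+h)) (u x)
          calc |u (x + h) - u x| = |(u (x+h) - g (x+h)) + (g (x+h) - g x) + (g x - u x)| := by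
                ring_nf
            _ ≤ _ := by
                refine le_trans (abs_add_le _ _) ?_
                gcongr
                exact abs_add_le _ _
      _ ≤ _ := by
          rw [ENNReal.ofReal_add (by positivity) (abs_nonneg _),
            ENNReal.ofReal_add (by positivity) (abs_nonneg _)]
  have m1 : Measurable fun x : Euc N => ENNReal.ofReal |u (x + h) - g (x + h)| := by
    apply Measurable.ennreal_ofReal
    exact ((hmeas.comp (measurable_add_const h)).sub
      (gcont.measurable.comp (measurable_add_const h))).abs
  have m2 : Measurable fun x : Euc N => ENNReal.ofReal |g (x + h) - g x| := by
    apply Measurable.ennreal_ofReal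
    exact ((gcont.measurable.comp (measurable_add_const h)).sub gcont.measurable).abs
  have tr1 : (∫⁻ x, ENNReal.ofReal |u (x + h) - g (x + h)|) =
      ∫⁻ x, ENNReal.ofReal |u x - g x| :=
    lintegral_add_right_eq_self (fun x => ENNReal.ofReal |u x - g x|) h
  have hclose' : (∫⁻ x, ENNReal.ofReal |u x - g x|) ≤ ENNReal.ofReal (θ/4) := by
    refine le_trans (le_of_eq ?_) hclose
    apply lintegral_congr
    intro x
    rw [← Real.enorm_eq_ofReal_abs]
  have hclose'' : (∫⁻ x, ENNReal.ofReal |g x - u x|) ≤ ENNReal.ofReal (θ/4) := by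
    refine le_trans (le_of_eq ?_) hclose'
    apply lintegral_congr
    intro x
    rw [abs_sub_comm]
  calc (∫⁻ x, ENNReal.ofReal |u (x + h) - u x|)
      ≤ ∫⁻ x, (ENNReal.ofReal |u (x + h) - g (x + h)| + ENNReal.ofReal |g (x + h) - g x|
          + ENNReal.ofReal |g x - u x|) := lintegral_mono key
    _ ≤ (∫⁻ x, ENNReal.ofReal |u (x + h) - g (x + h)|) +
          (∫⁻ x, ENNReal.ofReal |g (x + h) - g x|) +
          (∫⁻ x, ENNReal.ofReal |g x - u x|) := by
        rw [lintegral_add_left (f := fun x => ENNReal.ofReal |u (x + h) - g (x + h)| + ENNReal.ofReal |g (x + h) - g x|) (m1.add m2), lintegral_add_left m1]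
    _ ≤ ENNReal.ofReal (θ/4) + ENNReal.ofReal (θ/4) + ENNReal.ofReal (θ/4) := by
        rw [tr1]
        gcongr
    _ = ENNReal.ofReal (3*θ/4) := by
        rw [← ENNReal.ofReal_add (by positivity) (by positivity),
          ← ENNReal.ofReal_add (by positivity) (by positivity)]
        ring_nf
    _ < ENNReal.ofReal θ := by
        apply (ENNReal.ofReal_lt_ofReal_iff hθ).mpr
        linarith

open Classical in
/-- The translation operator `T_h` relative to `Ω`. -/
def Ttrans {N : ℕ} (Ω : Set (Euc N)) (u : Euc N → ℝ) (h : Euc N) (x : Euc N) : ℝ :=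
  if x ∈ Ω ∧ x + h ∈ Ω then u (x + h) else 0

/-- continuity of translations in `L^Ĝ(Ω)` for bounded measurable
functions with compact support in `Ω`. -/
theorem stmt_17 {N : ℕ} (hN : 1 ≤ N) (Ω : Set (Euc N)) (hΩ : IsOpen Ω)
    (a : Euc N → Euc N → ℝ → ℝ) (gm gp : ℝ) (hg : Hg Ω a gm gp)
    (hloc : ∀ c : ℝ, 0 < c → ∀ A : Set (Euc N), IsCompact A → A ⊆ Ω →
      (∫⁻ x in A, ENNReal.ofReal (GofA a x x c)) < ⊤)
    (u : Euc N → ℝ) (hmeas : Measurable u)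
    (C : ℝ) (hbd : ∀ x, |u x| ≤ C)
    (hcpt : IsCompact (tsupport u)) (hsupp : tsupport u ⊆ Ω)
    (ε : ℝ) (hε : 0 < ε) :
    ∃ η : ℝ, 0 < η ∧ ∀ h : Euc N, ‖h‖ < η →
      luxNorm Ω a (fun x => Ttrans Ω u h x - u x) < ε := by
  classical
  -- basic constants
  set C' : ℝ := max C 1 with hC'def
  have hC' : 0 < C' := lt_of_lt_of_le one_pos (le_max_right _ _)
  have hbd' : ∀ x, |u x| ≤ C' := fun x => le_trans (hbd x) (le_max_left _ _)
  set l : ℝ := ε / 2 with hldef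
  have hl : 0 < l := by positivity
  -- monotonicity facts about G on the diagonal
  have hxmono : ∀ x ∈ Ω, MonotoneOn (fun t => a x x t * t) (Ici 0) := by
    intro x hx
    exact aux_monoOn (by simp) (fun t ht => mul_nonneg (hg.1 x hx x hx t ht) (le_of_lt ht))
      (hg.2.2.2.2.1 x hx x hx)
  have hGmono : ∀ x ∈ Ω, ∀ s t : ℝ, 0 ≤ s → s ≤ t →
      GofA a x x s ≤ GofA a x x t := by
    intro x hx s t hs hst
    exact auxG_mono (hxmono x hx) (by simp) hs hst
  have hGnn : ∀ x ∈ Ω, ∀ t : ℝ, 0 ≤ t → 0 ≤ GofA a x x t := by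
    intro x hx t ht
    exact auxG_nonneg (hxmono x hx) (by simp) ht
  -- geometry: a compact neighborhood of the support inside Ω
  obtain ⟨δ, δpos, hδΩ⟩ := hcpt.exists_cthickening_subset_open hΩ hsupp
  set K : Set (Euc N) := Metric.cthickening δ (tsupport u) with hKdef
  have hK : IsCompact K := hcpt.cthickening
  have hKm : MeasurableSet K := Metric.isClosed_cthickening.measurableSet
  have hKΩ : K ⊆ Ω := hδΩ
  -- the dominating function
  have harg : 0 < 2 * C' / l := by positivity
  set I : ℝ≥0∞ := ∫⁻ x in K, ENNReal.ofReal (GofA a x x (2 * C' / l)) with hIdef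
  have hI : I < ⊤ := hloc _ harg K hK hKΩ
  set F : Euc N → ℝ≥0∞ := K.indicator (fun x => ENNReal.ofReal (GofA a x x (2 * C' / l)))
    with hFdef
  have hFint : (∫⁻ x, F x) = I := lintegral_indicator hKm _
  -- absolute continuity of the integral of F
  obtain ⟨δ₀, δ₀pos, hδ₀⟩ := exists_pos_setLIntegral_lt_of_measure_lt
    (μ := volume) (f := F) (by rw [hFint]; exact hI.ne) (ε := 1/2)
    (by norm_num)
  -- choice of β
  set It : ℝ := I.toReal with hItdef
  have hItnn : 0 ≤ It := ENNReal.toReal_nonneg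
  set βr : ℝ := min (2 * C') (C' / (It + 1)) with hβdef
  have hβpos : 0 < βr := lt_min (by positivity) (by positivity)
  have hβle : βr ≤ 2 * C' := min_le_left _ _
  have hILe : I ≤ ENNReal.ofReal (It + 1) := by
    calc I = ENNReal.ofReal It := (ENNReal.ofReal_toReal hI.ne).symm
      _ ≤ _ := ENNReal.ofReal_le_ofReal (by linarith)
  have hscale : ENNReal.ofReal (βr / (2 * C')) * I ≤ 1/2 := by
    have h1 : βr / (2 * C') ≤ 1 / (2 * (It + 1)) := by
      have h2 : βr ≤ C' / (It + 1) := min_le_right _ _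
      rw [le_div_iff₀ (by positivity)] at h2
      rw [div_le_div_iff₀ (by positivity) (by positivity)]
      nlinarith
    calc ENNReal.ofReal (βr / (2 * C')) * I
        ≤ ENNReal.ofReal (1 / (2 * (It + 1))) * ENNReal.ofReal (It + 1) := by
          gcongr
      _ = ENNReal.ofReal (1 / (2 * (It + 1)) * (It + 1)) := by
          rw [← ENNReal.ofReal_mul (by positivity)]
      _ = ENNReal.ofReal (1/2 : ℝ) := by
          congr 1
          field_simp
      _ = 1/2 := by
          rw [ENNReal.ofReal_div_of_pos (by norm_num)]
          norm_num
  -- threshold for the L¹ translation estimate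
  set δ₀' : ℝ≥0∞ := min δ₀ 1 with hδ₀'def
  have hδ₀'pos : 0 < δ₀' := lt_min δ₀pos one_pos
  have hδ₀'top : δ₀' ≠ ⊤ := ne_top_of_le_ne_top (by norm_num) (min_le_right _ _)
  have hδ₀'t : 0 < δ₀'.toReal := ENNReal.toReal_pos hδ₀'pos.ne' hδ₀'top
  set θ : ℝ := βr * (δ₀'.toReal / 2) with hθdef
  have hθpos : 0 < θ := by positivity
  -- integrability of u
  have hint : Integrable u (volume : Measure (Euc N)) := by
    refine ⟨hmeas.aestronglyMeasurable, ?_⟩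
    show (∫⁻ x, (‖u x‖₊ : ℝ≥0∞)) < ⊤
    calc (∫⁻ x, (‖u x‖₊ : ℝ≥0∞))
        ≤ ∫⁻ x, (tsupport u).indicator (fun _ => ENNReal.ofReal C') x := by
          apply lintegral_mono
          intro x
          show (‖u x‖₊ : ℝ≥0∞) ≤ _
          by_cases hx : x ∈ tsupport u
          · rw [Set.indicator_of_mem hx, ← enorm_eq_nnnorm, Real.enorm_eq_ofReal_abs]
            exact ENNReal.ofReal_le_ofReal (hbd' x)
          · rw [image_eq_zero_of_notMem_tsupport hx]
            simp
      _ = ENNReal.ofReal C' * volume (tsupport u) :=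
          lintegral_indicator_const (isClosed_tsupport u).measurableSet _
      _ < ⊤ := ENNReal.mul_lt_top ENNReal.ofReal_lt_top hcpt.measure_lt_top
  obtain ⟨η₁, η₁pos, hη₁⟩ := aux_l1_translation u hmeas hint hθpos
  refine ⟨min η₁ δ, lt_min η₁pos δpos, fun h hh => ?_⟩
  have hhη₁ : ‖h‖ < η₁ := lt_of_lt_of_le hh (min_le_left _ _)
  have hhδ : ‖h‖ < δ := lt_of_lt_of_le hh (min_le_right _ _)
  -- the translated difference
  set v : Euc N → ℝ := fun x => Ttrans Ω u h x - u x with hvdef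
  have claim1 : ∀ x, Ttrans Ω u h x = u (x + h) := by
    intro x
    by_cases hx : x ∈ Ω ∧ x + h ∈ Ω
    · rw [Ttrans, if_pos hx]
    · rw [Ttrans, if_neg hx]
      by_contra hne
      have hXh : x + h ∈ tsupport u := subset_tsupport u (fun hc => hne hc.symm)
      have hxK : x ∈ K := by
        apply Metric.mem_cthickening_of_dist_le x (x + h) δ _ hXh
        rw [dist_eq_norm]
        simpa using hhδ.le
      exact hx ⟨hKΩ hxK, hsupp hXh⟩
  have hveq : ∀ x, v x = u (x + h) - u x := by
    intro x; rw [hvdef]; simp only [claim1]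
  have claim2 : ∀ x, x ∉ K → v x = 0 := by
    intro x hx
    rw [hveq]
    have hx1 : u x = 0 := by
      apply image_eq_zero_of_notMem_tsupport
      exact fun hmem => hx (Metric.self_subset_cthickening _ hmem)
    have hx2 : u (x + h) = 0 := by
      apply image_eq_zero_of_notMem_tsupport
      intro hmem
      apply hx
      apply Metric.mem_cthickening_of_dist_le x (x + h) δ _ hmem
      rw [dist_eq_norm]
      simpa using hhδ.le
    rw [hx1, hx2, sub_zero]
  have hv : Measurable v := by
    have hm1 : Measurable fun x => u (x + h) := hmeas.comp (measurable_add_const h)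
    have h2 : Measurable fun x => u (x + h) - u x := hm1.sub hmeas
    have : v = fun x => u (x + h) - u x := funext hveq
    rw [this]
    exact h2
  have hvbd : ∀ x, |v x| ≤ 2 * C' := by
    intro x
    rw [hveq]
    calc |u (x + h) - u x| ≤ |u (x + h)| + |u x| := abs_sub _ _
      _ ≤ C' + C' := add_le_add (hbd' _) (hbd' _)
      _ = 2 * C' := by ring
  -- the exceptional set
  set E : Set (Euc N) := {x | βr ≤ |v x|} with hEdef
  have hEm : MeasurableSet E := measurableSet_le measurable_const hv.abs
  have hEK : E ⊆ K := by
    intro x hx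
    by_contra hc
    have := claim2 x hc
    rw [hEdef] at hx
    simp only [mem_setOf_eq, this, abs_zero] at hx
    linarith
  -- Chebyshev: E has small measure
  have hL1 : (∫⁻ x, ENNReal.ofReal |v x|) < ENNReal.ofReal θ := by
    have := hη₁ h hhη₁
    refine lt_of_le_of_lt (le_of_eq ?_) this
    apply lintegral_congr
    intro x
    rw [hveq]
  have hvolE : volume E < δ₀ := by
    have hcheb := mul_meas_ge_le_lintegral₀
      (μ := volume) (hv.abs.ennreal_ofReal.aemeasurable) (ENNReal.ofReal βr)
    have hsets : {x | ENNReal.ofReal βr ≤ ENNReal.ofReal |v x|} = E := by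
      ext x
      simp only [mem_setOf_eq, hEdef, ENNReal.ofReal_le_ofReal_iff (abs_nonneg _)]
    rw [hsets] at hcheb
    have hlt : ENNReal.ofReal βr * volume E < ENNReal.ofReal βr * δ₀' := by
      calc ENNReal.ofReal βr * volume E ≤ ∫⁻ x, ENNReal.ofReal |v x| := hcheb
        _ < ENNReal.ofReal θ := hL1
        _ = ENNReal.ofReal βr * ENNReal.ofReal (δ₀'.toReal / 2) := by
            rw [hθdef, ENNReal.ofReal_mul hβpos.le]
        _ < ENNReal.ofReal βr * δ₀' := by
            have hhalf : ENNReal.ofReal (δ₀'.toReal / 2) < δ₀' := by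
              conv_rhs => rw [← ENNReal.ofReal_toReal hδ₀'top]
              exact (ENNReal.ofReal_lt_ofReal_iff hδ₀'t).mpr (by linarith)
            exact (ENNReal.mul_lt_mul_iff_right (ENNReal.ofReal_pos.mpr hβpos).ne'
              ENNReal.ofReal_ne_top).mpr hhalf
    have := (ENNReal.mul_lt_mul_iff_right (ENNReal.ofReal_pos.mpr hβpos).ne'
      ENNReal.ofReal_ne_top).mp hlt
    exact lt_of_lt_of_le this (min_le_left _ _)
  -- the modular estimate
  have hmod : modG Ω a (fun x => v x / l) ≤ 1 := by
    have hWmono : ∀ x ∈ Ω, ∀ s t : ℝ, 0 ≤ s → s ≤ t →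
        ENNReal.ofReal (GofA a x x s) ≤ ENNReal.ofReal (GofA a x x t) :=
      fun x hx s t hs hst => ENNReal.ofReal_le_ofReal (hGmono x hx s t hs hst)
    have habs : ∀ x : Euc N, |v x / l| = |v x| / l := by
      intro x
      rw [abs_div, abs_of_pos hl]
    have hsplit : modG Ω a (fun x => v x / l) =
        (∫⁻ x in Ω ∩ E, ENNReal.ofReal (GofA a x x |v x / l|)) +
        (∫⁻ x in Ω \ E, ENNReal.ofReal (GofA a x x |v x / l|)) := by
      rw [modG]
      conv_lhs => rw [← Set.inter_union_diff Ω E]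
      rw [Measure.restrict_union (Set.disjoint_of_subset_left (inter_subset_right)
        disjoint_sdiff_right) (hΩ.measurableSet.diff hEm), lintegral_add_measure]
    rw [hsplit]
    have piece1 : (∫⁻ x in Ω ∩ E, ENNReal.ofReal (GofA a x x |v x / l|)) ≤ 1/2 := by
      refine le_of_lt ?_
      have hb : ∀ᵐ x ∂(volume.restrict (Ω ∩ E)),
          ENNReal.ofReal (GofA a x x |v x / l|) ≤ F x := by
        rw [ae_restrict_iff' (hΩ.measurableSet.inter hEm)]
        apply ae_of_all
        rintro x ⟨hxΩ, hxE⟩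
        have hxK : x ∈ K := hEK hxE
        rw [hFdef]
        rw [Set.indicator_of_mem hxK]
        apply hWmono x hxΩ _ _ (abs_nonneg _)
        rw [habs]
        gcongr
        exact hvbd x
      calc (∫⁻ x in Ω ∩ E, ENNReal.ofReal (GofA a x x |v x / l|))
          ≤ ∫⁻ x in Ω ∩ E, F x := lintegral_mono_ae hb
        _ < 1/2 := hδ₀ _ (lt_of_le_of_lt (measure_mono (inter_subset_right)) hvolE)
    have piece2 : (∫⁻ x in Ω \ E, ENNReal.ofReal (GofA a x x |v x / l|)) ≤ 1/2 := by
      have hb : ∀ᵐ x ∂(volume.restrict (Ω \ E)),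
          ENNReal.ofReal (GofA a x x |v x / l|) ≤ ENNReal.ofReal (βr / (2 * C')) * F x := by
        rw [ae_restrict_iff' (hΩ.measurableSet.diff hEm)]
        apply ae_of_all
        rintro x ⟨hxΩ, hxE⟩
        have hvx : |v x| < βr := by
          by_contra hc
          exact hxE (le_of_not_gt hc)
        by_cases hxK : x ∈ K
        · have hstep1 : ENNReal.ofReal (GofA a x x |v x / l|) ≤
              ENNReal.ofReal (GofA a x x (βr / l)) := by
            apply hWmono x hxΩ _ _ (abs_nonneg _)
            rw [habs]
            gcongr
          have hstep2 : GofA a x x (βr / l) ≤ βr / (2 * C') * GofA a x x (2 * C' / l) := by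
            have heq : βr / (2 * C') * (2 * C' / l) = βr / l := by field_simp
            have := auxG_scale (hxmono x hxΩ) (by simp)
              (lam := βr / (2 * C')) (t := 2 * C' / l)
              (by positivity) (by rw [div_le_one (by positivity)]; exact hβle) harg.le
            rw [heq] at this
            exact this
          calc ENNReal.ofReal (GofA a x x |v x / l|)
              ≤ ENNReal.ofReal (GofA a x x (βr / l)) := hstep1
            _ ≤ ENNReal.ofReal (βr / (2 * C') * GofA a x x (2 * C' / l)) :=
                ENNReal.ofReal_le_ofReal hstep2
            _ = ENNReal.ofReal (βr / (2 * C')) * ENNReal.ofReal (GofA a x x (2 * C' / l)) :=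
                ENNReal.ofReal_mul (by positivity)
            _ = ENNReal.ofReal (βr / (2 * C')) * F x := by
                rw [hFdef, Set.indicator_of_mem hxK]
        · have : v x = 0 := claim2 x hxK
          rw [this]
          simp only [zero_div, abs_zero]
          have : GofA a x x 0 = 0 := by
            rw [GofA, intervalIntegral.integral_same]
          rw [this]
          simp
      calc (∫⁻ x in Ω \ E, ENNReal.ofReal (GofA a x x |v x / l|))
          ≤ ∫⁻ x in Ω \ E, ENNReal.ofReal (βr / (2 * C')) * F x := lintegral_mono_ae hb
        _ = ENNReal.ofReal (βr / (2 * C')) * ∫⁻ x in Ω \ E, F x :=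
            lintegral_const_mul' _ _ ENNReal.ofReal_ne_top
        _ ≤ ENNReal.ofReal (βr / (2 * C')) * I := by
            gcongr
            rw [← hFint]
            exact setLIntegral_le_lintegral _ _
        _ ≤ 1/2 := hscale
    calc _ ≤ (1/2 : ℝ≥0∞) + 1/2 := add_le_add piece1 piece2
      _ = 1 := ENNReal.add_halves 1
  -- conclude via the Luxemburg norm
  have hmem : l ∈ {t : ℝ | 0 < t ∧ modG Ω a (fun x => (Ttrans Ω u h x - u x) / t) ≤ 1} :=
    ⟨hl, hmod⟩
  have hbdd : BddBelow {t : ℝ | 0 < t ∧ modG Ω a (fun x => (Ttrans Ω u h x - u x) / t) ≤ 1} :=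
    ⟨0, fun b hb => hb.1.le⟩
  calc luxNorm Ω a (fun x => Ttrans Ω u h x - u x) ≤ l := csInf_le hbdd hmem
    _ < ε := by rw [hldef]; linarith

end
end
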